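/- Let h ≥ 2, let A be a finite set, let q be a probability mass function on A, let R be a finite set with probability mass function p, and for each party i ∈ {1,…,h} let p_{A_i} : R → (A → [0,1]) be a strategy with ∑_{a ∈ A} p_{A_i}(r)(a) = 1 for all r. If ∑_{r ∈ R} p(r)·p_{A_1}(r)(a₁)⋯p_{A_h}(r)(a_h) = 𝟙[a₁ = ⋯ = a_h]·q(a₁) for all a₁,…,a_h ∈ A, then |R| ≥ |supp(q)|, where supp(q) = {a ∈ A : q(a) > 0}. -/

import Mathlib

/-!
For each outcome `a` in the support of `q`, the diagonal event `(a, …, a)` has positive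
probability, so some source value `r` with `p r > 0` lets every party output `a` with positive
probability. No `r` can do this for two distinct outcomes `a ≠ b`: letting party `0` output `a`
and all other parties output `b` would then give the off-diagonal event `(a, b, …, b)` positive
probability. So the points of the support of `q` index pairwise disjoint nonempty sets of source
values.
-/

open Finset

lemma prod_pos_iff_of_nonneg {ι : Type*} [Fintype ι] {f : ι → ℝ} (hf : ∀ i, 0 ≤ f i) :
    0 < ∏ i, f i ↔ ∀ i, 0 < f i := by
  refine ⟨fun hprod i => (hf i).lt_of_ne fun hi => ?_, fun hpos => prod_pos fun i _ => hpos i⟩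
  rw [prod_eq_zero (mem_univ i) hi.symm] at hprod
  exact hprod.false

open Classical in
noncomputable def diagonalSources {ι R A : Type*} [Fintype R] (p : R → ℝ) (pA : ι → R → A → ℝ)
    (a : A) : Finset R :=
  univ.filter fun r => 0 < p r ∧ ∀ i, 0 < pA i r a

@[simp]
lemma mem_diagonalSources {ι R A : Type*} [Fintype R] {p : R → ℝ} {pA : ι → R → A → ℝ} {a : A}
    {r : R} : r ∈ diagonalSources p pA a ↔ 0 < p r ∧ ∀ i, 0 < pA i r a := by
  simp [diagonalSources]

section LocalModel

variable {ι R A : Type*} [Fintype ι] [Fintype R]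
  {p : R → ℝ} {pA : ι → R → A → ℝ}

lemma sum_mul_prod_pos_iff (hp0 : ∀ r, 0 ≤ p r) (hpA0 : ∀ i r a, 0 ≤ pA i r a) (x : ι → A) :
    0 < ∑ r, p r * ∏ i, pA i r (x i) ↔ ∃ r, 0 < p r ∧ ∀ i, 0 < pA i r (x i) := by
  have hprod0 : ∀ r, 0 ≤ ∏ i, pA i r (x i) := fun r => prod_nonneg fun i _ => hpA0 i r (x i)
  rw [sum_pos_iff_of_nonneg fun r _ => mul_nonneg (hp0 r) (hprod0 r)]
  simp only [mem_univ, true_and, mul_pos_iff, (hp0 _).not_gt, (hprod0 _).not_gt, and_false,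
    or_false, prod_pos_iff_of_nonneg fun i => hpA0 i _ _]

lemma diagonalSources_nonempty (hp0 : ∀ r, 0 ≤ p r) (hpA0 : ∀ i r a, 0 ≤ pA i r a) {a : A}
    (ha : 0 < ∑ r, p r * ∏ i, pA i r a) : (diagonalSources p pA a).Nonempty := by
  obtain ⟨r, hr⟩ := (sum_mul_prod_pos_iff hp0 hpA0 fun _ => a).mp ha
  exact ⟨r, mem_diagonalSources.mpr hr⟩

lemma disjoint_diagonalSources {i₀ i₁ : ι} (hi : i₀ ≠ i₁)
    (hp0 : ∀ r, 0 ≤ p r) (hpA0 : ∀ i r a, 0 ≤ pA i r a)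
    (hoff : ∀ x : ι → A, x i₀ ≠ x i₁ → ∑ r, p r * ∏ i, pA i r (x i) = 0)
    {a b : A} (hab : a ≠ b) : Disjoint (diagonalSources p pA a) (diagonalSources p pA b) := by
  classical
  refine disjoint_left.mpr fun r hra hrb => ?_
  obtain ⟨hpr, hpa⟩ := mem_diagonalSources.mp hra
  obtain ⟨-, hpb⟩ := mem_diagonalSources.mp hrb
  set x : ι → A := Function.update (fun _ => b) i₀ a
  have hx : x i₀ ≠ x i₁ := by simpa [x, hi.symm] using hab
  have hmixed : 0 < ∑ r, p r * ∏ i, pA i r (x i) := by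
    refine (sum_mul_prod_pos_iff hp0 hpA0 x).mpr ⟨r, hpr, fun i => ?_⟩
    by_cases h : i = i₀
    · subst h; simpa [x] using hpa i
    · simpa [x, h] using hpb i
  exact hmixed.ne' (hoff x hx)

end LocalModel

/-- in the no-input multipartite Bell scenario, generating the perfectly
correlated distribution `𝟙[a₁ = ⋯ = a_h]·q(a₁)` requires a shared randomness source
of cardinality at least `|supp(q)|`. -/
theorem stmt_4 {A R : Type*} [Fintype A] [Fintype R] [DecidableEq A]
    (h : ℕ) (hh : 2 ≤ h)
    (p : R → ℝ) (hp0 : ∀ r, 0 ≤ p r)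
    (q : A → ℝ)
    (pA : Fin h → R → A → ℝ)
    (hpA0 : ∀ i r a, 0 ≤ pA i r a)
    (hgen : ∀ a : Fin h → A,
      ∑ r, p r * ∏ i, pA i r (a i) =
        if ∀ i, a i = a ⟨0, by omega⟩ then q (a ⟨0, by omega⟩) else 0) :
    Fintype.card R ≥ (Finset.univ.filter fun a : A => 0 < q a).card := by
  classical
  set i₀ : Fin h := ⟨0, by omega⟩
  set i₁ : Fin h := ⟨1, by omega⟩
  have hoff : ∀ x : Fin h → A, x i₀ ≠ x i₁ → ∑ r, p r * ∏ i, pA i r (x i) = 0 := fun x hx => by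
    rw [hgen, if_neg fun hall => hx (hall i₁).symm]
  have hdisj : (Set.univ : Set A).PairwiseDisjoint (diagonalSources p pA) :=
    fun a _ b _ hab => disjoint_diagonalSources (i₀ := i₀) (i₁ := i₁)
      (Fin.ne_of_val_ne zero_ne_one) hp0 hpA0 hoff hab
  have hnonempty : ∀ a ∈ univ.filter fun a : A => 0 < q a, (diagonalSources p pA a).Nonempty :=
    fun a ha => diagonalSources_nonempty hp0 hpA0 <| by
      simpa [hgen] using (mem_filter.mp ha).2
  calc (univ.filter fun a : A => 0 < q a).card
      ≤ ((univ.filter fun a : A => 0 < q a).biUnion (diagonalSources p pA)).card :=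
        card_le_card_biUnion (hdisj.subset (Set.subset_univ _)) hnonempty
    _ ≤ Fintype.card R := card_le_univ _
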